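/- Let Γ be a finitely generated group with a normal subgroup V isomorphic to ℤ^r (free abelian of rank r) such that the quotient Γ/V is cyclic, generated by the image of an element t ∈ Γ, and suppose the automorphism of V given by conjugation by t, written as a matrix A ∈ GL(r, ℤ) via the isomorphism V ≅ ℤ^r, has a complex eigenvalue λ with |λ| ≥ 2. Then Γ has uniform exponential growth. -/

import Mathlib

/-!
Let `y` be a left eigenvector of `A` for `λ`. Then `ψ = y ⬝ᵥ (coordinates of V ≅ ℤʳ)` is additive on
`V`, and conjugation by `g ≡ tᵈ (mod V)` multiplies it by `λᵈ`. Fix a finite generating set `S`.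
Some generator `u` lies outside `V` (as `t` does, acting nontrivially on `V`), so `s = u^{±1}`
multiplies `ψ` by some `μ` with `|μ| ≥ 2`. Some `v ∈ V` of word length at most 4 has `ψ v ≠ 0`:
otherwise the kernel of `ψ` in `V` contains the commutators of the generators, hence every
commutator, including `[t, v₀]`, where `ψ [t, v₀] = (λ - 1) ψ v₀ ≠ 0` for a suitable `v₀ ∈ V`.
Now for a word `w` of length `m` in `vs` and `s`, `ψ (w s⁻ᵐ)` is `(∑ εᵢ μⁱ) ψ v` with digits
`εᵢ ∈ {0, 1}`, and `|μ| ≥ 2` makes such expansions unique. So the `2ᵐ` words are distinct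
elements of `B_{5m}`, and `β(S) ≥ 2^{1/10}` for every `S`.
-/

open Subgroup

/-- The ball of radius `n`: elements expressible as a product of at most `n`
elements of `S ∪ S⁻¹`. -/
def ball {G : Type*} [Group G] (S : Finset G) (n : ℕ) : Set G :=
  {g | ∃ l : List G, l.length ≤ n ∧ (∀ x ∈ l, x ∈ S ∨ x⁻¹ ∈ S) ∧ l.prod = g}

/-- The growth rate `β(S,Γ) = inf_{n ≥ 1} β_n(S,Γ)^(1/n)`. -/
noncomputable def growthRate {G : Type*} [Group G] (S : Finset G) : ℝ :=
  ⨅ n : ℕ, (Nat.card (ball S (n + 1)) : ℝ) ^ (((n : ℝ) + 1)⁻¹)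

/-- Word length with respect to `S`. -/
noncomputable def wordLength {G : Type*} [Group G] (S : Finset G) (g : G) : ℕ :=
  sInf {n : ℕ | g ∈ ball S n}

/-- `a` and `b` generate a free semigroup. -/
def GeneratesFreeSemigroup {G : Type*} [Group G] (a b : G) : Prop :=
  Function.Injective
    (FreeSemigroup.lift (fun x : Bool => if x then a else b) : FreeSemigroup Bool →ₙ* G)

/-- `β(G) = inf_S β(S,G)` over all finite generating sets. -/
noncomputable def groupGrowthRate (G : Type*) [Group G] : ℝ :=
  sInf {r : ℝ | ∃ S : Finset G, Subgroup.closure (S : Set G) = ⊤ ∧ r = growthRate S}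

/-- Uniform exponential growth: `inf_S β(S,G) > 1`. -/
def UniformExponentialGrowth (G : Type*) [Group G] : Prop :=
  1 < groupGrowthRate G

/-- Exponential growth: `β(S,G) > 1` for some finite generating set. -/
def ExponentialGrowth (G : Type*) [Group G] : Prop :=
  ∃ S : Finset G, Subgroup.closure (S : Set G) = ⊤ ∧ 1 < growthRate S

/-- Polynomial growth. -/
def PolynomialGrowth (G : Type*) [Group G] : Prop :=
  ∃ (S : Finset G) (C : ℝ) (d : ℕ), Subgroup.closure (S : Set G) = ⊤ ∧
    ∀ n : ℕ, 1 ≤ n → (Nat.card (ball S n) : ℝ) ≤ C * (n : ℝ) ^ d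

open scoped commutatorElement

section Ball

variable {G : Type*} [Group G] (S : Finset G)

lemma one_mem_ball (n : ℕ) : (1 : G) ∈ ball S n :=
  ⟨[], by simp⟩

lemma ball_mono {m n : ℕ} (h : m ≤ n) : ball S m ⊆ ball S n :=
  fun _ ⟨l, hl, hlS, hprod⟩ => ⟨l, hl.trans h, hlS, hprod⟩

lemma mem_ball_one {s : G} (hs : s ∈ S) : s ∈ ball S 1 :=
  ⟨[s], by simp [hs]⟩

lemma inv_mem_ball_one {s : G} (hs : s ∈ S) : s⁻¹ ∈ ball S 1 :=
  ⟨[s⁻¹], by simp [hs]⟩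

lemma mul_mem_ball {a b : G} {m n : ℕ} (ha : a ∈ ball S m) (hb : b ∈ ball S n) :
    a * b ∈ ball S (m + n) := by
  obtain ⟨l, hl, hlS, rfl⟩ := ha
  obtain ⟨l', hl', hl'S, rfl⟩ := hb
  refine ⟨l ++ l', by simp only [List.length_append]; omega, fun x hx => ?_, List.prod_append⟩
  rcases List.mem_append.1 hx with h | h
  exacts [hlS x h, hl'S x h]

lemma list_prod_mem_ball {k : ℕ} {l : List G} (h : ∀ x ∈ l, x ∈ ball S k) :
    l.prod ∈ ball S (k * l.length) := by
  induction l with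
  | nil => exact one_mem_ball S _
  | cons a l ih =>
    rw [List.prod_cons, List.length_cons, Nat.mul_succ, add_comm]
    exact mul_mem_ball S (h a List.mem_cons_self) (ih fun x hx => h x (List.mem_cons_of_mem _ hx))

lemma ball_finite (n : ℕ) : (ball S n).Finite := by
  have : Finite {x : G // x ∈ S ∨ x⁻¹ ∈ S} :=
    (S.finite_toSet.union S.finite_toSet.inv).to_subtype
  refine ((List.finite_length_le _ n).image
    fun l : List {x : G // x ∈ S ∨ x⁻¹ ∈ S} => (l.map Subtype.val).prod).subset ?_
  rintro g ⟨l, hl, hlS, rfl⟩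
  lift l to List {x : G // x ∈ S ∨ x⁻¹ ∈ S} using hlS
  exact ⟨l, by simpa using hl, rfl⟩

lemma card_ball_mono {m n : ℕ} (h : m ≤ n) : Nat.card (ball S m) ≤ Nat.card (ball S n) :=
  Nat.card_mono (ball_finite S n) (ball_mono S h)

lemma two_le_card_ball_one {s : G} (hs : s ∈ S) (hs1 : s ≠ 1) : 2 ≤ Nat.card (ball S 1) := by
  rw [Nat.card_coe_set_eq, ← Set.ncard_pair hs1.symm]
  exact Set.ncard_le_ncard
    (Set.insert_subset_iff.2 ⟨one_mem_ball S 1, Set.singleton_subset_iff.2 (mem_ball_one S hs)⟩)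
    (ball_finite S 1)

lemma rpow_inv_le_growthRate {c p : ℕ} (hp : 0 < p)
    (h : ∀ n, 1 ≤ n → c ^ n ≤ Nat.card (ball S n) ^ p) :
    (c : ℝ) ^ (p : ℝ)⁻¹ ≤ growthRate S := by
  refine le_ciInf fun n => ?_
  have key : ((c : ℝ) ^ (n + 1)) ^ ((p : ℝ) * (n + 1))⁻¹ ≤
      ((Nat.card (ball S (n + 1)) : ℝ) ^ p) ^ ((p : ℝ) * (n + 1))⁻¹ :=
    Real.rpow_le_rpow (by positivity) (by exact_mod_cast h (n + 1) (by omega)) (by positivity)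
  have hc : ((n + 1 : ℕ) : ℝ) * ((p : ℝ) * (n + 1))⁻¹ = (p : ℝ)⁻¹ := by push_cast; field_simp
  have hcard : (p : ℝ) * ((p : ℝ) * (n + 1))⁻¹ = ((n : ℝ) + 1)⁻¹ := by field_simp
  rwa [← Real.rpow_natCast, ← Real.rpow_natCast (Nat.card _ : ℝ), ← Real.rpow_mul (by positivity),
    ← Real.rpow_mul (by positivity), hc, hcard] at key

end Ball

lemma uniformExponentialGrowth_of_le_growthRate {G : Type*} [Group G] (hG : Group.FG G) {c : ℝ}
    (hc : 1 < c) (h : ∀ S : Finset G, closure (S : Set G) = ⊤ → c ≤ growthRate S) :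
    UniformExponentialGrowth G := by
  obtain ⟨S, hS⟩ := hG.out
  exact hc.trans_le (le_csInf ⟨_, S, hS, rfl⟩ (by rintro _ ⟨S, hS, rfl⟩; exact h S hS))

section Words

variable {G : Type*} [Group G]

def boolWord (a b : G) {m : ℕ} (f : Fin m → Bool) : G :=
  (List.ofFn fun i => if f i then a else b).prod

lemma boolWord_zero (a b : G) (f : Fin 0 → Bool) : boolWord a b f = 1 := rfl

lemma boolWord_succ (a b : G) {m : ℕ} (f : Fin (m + 1) → Bool) :
    boolWord a b f = (if f 0 then a else b) * boolWord a b (fun i => f i.succ) := by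
  rw [boolWord, List.ofFn_succ, List.prod_cons]
  rfl

variable (S : Finset G) {a b : G} {k : ℕ}

lemma boolWord_mem_ball (ha : a ∈ ball S k) (hb : b ∈ ball S k) {m : ℕ} (f : Fin m → Bool) :
    boolWord a b f ∈ ball S (k * m) := by
  rw [boolWord]
  simpa using list_prod_mem_ball S (l := List.ofFn fun i => if f i then a else b)
    (by simp only [List.mem_ofFn]; rintro _ ⟨i, rfl⟩; split <;> assumption)

lemma two_pow_le_card_ball (ha : a ∈ ball S k) (hb : b ∈ ball S k) {m : ℕ}
    (hinj : Function.Injective (boolWord a b : (Fin m → Bool) → G)) :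
    2 ^ m ≤ Nat.card (ball S (k * m)) := by
  have : Finite (ball S (k * m)) := (ball_finite S _).to_subtype
  simpa using Nat.card_le_card_of_injective
    (fun f => (⟨boolWord a b f, boolWord_mem_ball S ha hb f⟩ : ball S (k * m)))
    fun f f' h => hinj (congrArg Subtype.val h)

lemma le_growthRate_of_injective_boolWord (hk : 0 < k) (ha : a ∈ ball S k) (hb : b ∈ ball S k)
    {s : G} (hs : s ∈ S) (hs1 : s ≠ 1)
    (hinj : ∀ m, Function.Injective (boolWord a b : (Fin m → Bool) → G)) :
    (2 : ℝ) ^ ((2 * k : ℕ) : ℝ)⁻¹ ≤ growthRate S := by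
  refine rpow_inv_le_growthRate S (by omega) fun n hn => ?_
  by_cases hnk : n < k
  · calc 2 ^ n ≤ 2 ^ (2 * k) := Nat.pow_le_pow_right (by norm_num) (by omega)
      _ ≤ Nat.card (ball S n) ^ (2 * k) :=
        Nat.pow_le_pow_left ((two_le_card_ball_one S hs hs1).trans (card_ball_mono S hn)) _
  · have hdiv : 1 ≤ n / k := (Nat.one_le_div_iff hk).2 (by omega)
    have hn2k : n ≤ 2 * k * (n / k) := by
      have := Nat.div_add_mod n k
      have := Nat.mod_lt n hk
      nlinarith
    calc 2 ^ n ≤ 2 ^ (2 * k * (n / k)) := Nat.pow_le_pow_right (by norm_num) hn2k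
      _ = (2 ^ (n / k)) ^ (2 * k) := by rw [← pow_mul, mul_comm]
      _ ≤ Nat.card (ball S n) ^ (2 * k) :=
        Nat.pow_le_pow_left ((two_pow_le_card_ball S ha hb (hinj _)).trans
          (card_ball_mono S (Nat.mul_div_le n k))) _

end Words

/-- The top digit outweighs all lower ones, since `∑_{i<m} ‖μ‖^i ≤ ‖μ‖^m - 1` when `‖μ‖ ≥ 2`. -/
lemma eq_zero_of_sum_mul_pow_eq_zero {𝕜 : Type*} [NormedField 𝕜] {μ : 𝕜} (hμ : 2 ≤ ‖μ‖) :
    ∀ {m : ℕ} (d : Fin m → 𝕜), (∀ i, d i = 0 ∨ ‖d i‖ = 1) → ∑ i, d i * μ ^ (i : ℕ) = 0 → d = 0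
  | 0, _, _, _ => Subsingleton.elim _ _
  | m + 1, d, hd, hsum => by
    rw [Fin.sum_univ_castSucc] at hsum
    simp only [Fin.val_castSucc, Fin.val_last] at hsum
    have hlast : d (Fin.last m) = 0 := by
      refine (hd (Fin.last m)).resolve_right fun hone => ?_
      have hlow : ‖∑ i : Fin m, d i.castSucc * μ ^ (i : ℕ)‖ ≤ ‖μ‖ ^ m - 1 := calc
        _ ≤ ∑ i : Fin m, ‖μ‖ ^ (i : ℕ) := norm_sum_le_of_le _ fun i _ => by
            rw [norm_mul, norm_pow]
            rcases hd i.castSucc with h | h <;> simp [h]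
        _ = ∑ i ∈ Finset.range m, ‖μ‖ ^ i := Fin.sum_univ_eq_sum_range (‖μ‖ ^ ·) m
        _ = (‖μ‖ ^ m - 1) / (‖μ‖ - 1) := geom_sum_eq (by linarith) m
        _ ≤ ‖μ‖ ^ m - 1 := by
            have : 1 ≤ ‖μ‖ ^ m := one_le_pow₀ (by linarith)
            exact div_le_self (by linarith) (by linarith)
      rw [add_eq_zero_iff_eq_neg.1 hsum, norm_neg, norm_mul, hone, one_mul, norm_pow] at hlow
      linarith
    have hinit := eq_zero_of_sum_mul_pow_eq_zero hμ (fun i => d i.castSucc) (fun i => hd _)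
      (by simpa [hlast] using hsum)
    ext i
    exact Fin.lastCases hlast (fun i => congrFun hinit i) i

section Generation

variable {G : Type*} [Group G] {S : Set G}

lemma exists_mem_notMem_of_closure_eq_top (hS : closure S = ⊤) {H : Subgroup G} {g : G}
    (hg : g ∉ H) : ∃ s ∈ S, s ∉ H := by
  by_contra! h
  exact hg ((closure_le H).2 h (hS ▸ mem_top g))

lemma commutator_le_of_closure_eq_top (hS : closure S = ⊤) {K : Subgroup G} [K.Normal]
    (h : ∀ a ∈ S, ∀ b ∈ S, ⁅a, b⁆ ∈ K) : commutator G ≤ K := by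
  rw [← Normal.quotient_commutative_iff_commutator_le]
  set π := QuotientGroup.mk' K
  have hπS : closure (π '' S) = ⊤ := by
    rw [← MonoidHom.map_closure, hS, map_top_of_surjective _ (QuotientGroup.mk'_surjective K)]
  have : IsMulCommutative (closure (π '' S)) := isMulCommutative_closure <| by
    rintro _ ⟨a, ha, rfl⟩ _ ⟨b, hb, rfl⟩
    rw [← commutatorElement_eq_one_iff_mul_comm, ← map_commutatorElement,
      QuotientGroup.mk'_apply, QuotientGroup.eq_one_iff]
    exact h a ha b hb
  refine ⟨⟨fun x y => ?_⟩⟩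
  have hx : x ∈ closure (π '' S) := hπS ▸ mem_top x
  have hy : y ∈ closure (π '' S) := hπS ▸ mem_top y
  exact congrArg Subtype.val (mul_comm' (⟨x, hx⟩ : closure (π '' S)) ⟨y, hy⟩)

lemma commutator_le_of_forall_mem_zpowers {V : Subgroup G} [V.Normal] {t : G}
    (hcyc : ∀ x : G ⧸ V, x ∈ zpowers (t : G ⧸ V)) : commutator G ≤ V := by
  have : IsCyclic (G ⧸ V) := ⟨⟨t, fun x => mem_zpowers_iff.1 (hcyc x)⟩⟩
  exact Normal.quotient_commutative_iff_commutator_le.1 inferInstance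

end Generation

section ConjScales

variable {G 𝕜 : Type*} [Group G]

def ConjScales [Mul 𝕜] (V : Subgroup G) (ψ : G → 𝕜) (g : G) (c : 𝕜) : Prop :=
  ∀ w ∈ V, ψ (g * w * g⁻¹) = c * ψ w

variable [Field 𝕜] {V : Subgroup G} {ψ : G → 𝕜} {g h : G} {c d : 𝕜}

lemma map_one_of_map_mul (hψ : ∀ a ∈ V, ∀ b ∈ V, ψ (a * b) = ψ a + ψ b) : ψ 1 = 0 := by
  simpa using hψ 1 V.one_mem 1 V.one_mem

lemma map_inv_of_map_mul (hψ : ∀ a ∈ V, ∀ b ∈ V, ψ (a * b) = ψ a + ψ b) (hg : g ∈ V) :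
    ψ g⁻¹ = -ψ g := by
  have := hψ g hg g⁻¹ (V.inv_mem hg)
  rw [mul_inv_cancel, map_one_of_map_mul hψ] at this
  linear_combination -this

lemma ConjScales.one : ConjScales V ψ 1 1 := fun w _ => by simp

lemma conjScales_one_of_mem (hVcomm : ∀ a ∈ V, ∀ b ∈ V, a * b = b * a) (hg : g ∈ V) :
    ConjScales V ψ g 1 := fun w hw => by
  rw [hVcomm g hg w hw, mul_inv_cancel_right, one_mul]

lemma ConjScales.eq (hc : ConjScales V ψ g c) (hd : ConjScales V ψ g d) {w : G} (hw : w ∈ V)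
    (hψw : ψ w ≠ 0) : c = d :=
  mul_right_cancel₀ hψw ((hc w hw).symm.trans (hd w hw))

variable [V.Normal]

lemma ConjScales.mul (hg : ConjScales V ψ g c) (hh : ConjScales V ψ h d) :
    ConjScales V ψ (g * h) (c * d) := fun w hw => by
  rw [show g * h * w * (g * h)⁻¹ = g * (h * w * h⁻¹) * g⁻¹ by group,
    hg _ (Subgroup.Normal.conj_mem ‹_› w hw h), hh w hw, mul_assoc]

lemma ConjScales.inv (hg : ConjScales V ψ g c) (hc : c ≠ 0) : ConjScales V ψ g⁻¹ c⁻¹ :=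
  fun w hw => by
    have := hg (g⁻¹ * w * g⁻¹⁻¹) (Subgroup.Normal.conj_mem ‹_› w hw g⁻¹)
    rw [show g * (g⁻¹ * w * g⁻¹⁻¹) * g⁻¹ = w by group] at this
    rw [this, inv_mul_cancel_left₀ hc]

lemma ConjScales.pow (hg : ConjScales V ψ g c) : ∀ n : ℕ, ConjScales V ψ (g ^ n) (c ^ n)
  | 0 => by simpa using ConjScales.one
  | n + 1 => by simpa [pow_succ] using (hg.pow n).mul hg

lemma ConjScales.zpow (hg : ConjScales V ψ g c) (hc : c ≠ 0) :
    ∀ n : ℤ, ConjScales V ψ (g ^ n) (c ^ n)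
  | (n : ℕ) => by simpa using hg.pow n
  | .negSucc n => by simpa [zpow_negSucc] using (hg.pow (n + 1)).inv (pow_ne_zero _ hc)

lemma ConjScales.map_commutatorElement (hψ : ∀ a ∈ V, ∀ b ∈ V, ψ (a * b) = ψ a + ψ b)
    (hg : ConjScales V ψ g c) {w : G} (hw : w ∈ V) : ψ ⁅g, w⁆ = (c - 1) * ψ w := by
  rw [commutatorElement_def, hψ _ (Subgroup.Normal.conj_mem ‹_› w hw g) _ (V.inv_mem hw), hg w hw,
    map_inv_of_map_mul hψ hw]
  ring

end ConjScales

section WordCharacter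

variable {G 𝕜 : Type*} [Group G] [NormedField 𝕜] {V : Subgroup G} [V.Normal] {ψ : G → 𝕜}
  {s v : G}

lemma boolWord_mul_inv_pow_succ {m : ℕ} (f : Fin (m + 1) → Bool) :
    boolWord (v * s) s f * (s ^ (m + 1))⁻¹ =
      (if f 0 then v else 1) *
        (s * (boolWord (v * s) s (fun i => f i.succ) * (s ^ m)⁻¹) * s⁻¹) := by
  rw [boolWord_succ, pow_succ']
  split_ifs <;> group

lemma boolWord_mul_inv_pow_mem (hv : v ∈ V) :
    ∀ {m : ℕ} (f : Fin m → Bool), boolWord (v * s) s f * (s ^ m)⁻¹ ∈ V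
  | 0, f => by simp [boolWord_zero]
  | m + 1, f => by
    rw [boolWord_mul_inv_pow_succ]
    refine V.mul_mem (by split_ifs; exacts [hv, V.one_mem]) ?_
    exact Subgroup.Normal.conj_mem ‹_› _ (boolWord_mul_inv_pow_mem hv (fun i => f i.succ)) s

variable (hψ : ∀ a ∈ V, ∀ b ∈ V, ψ (a * b) = ψ a + ψ b)
include hψ

lemma map_boolWord_mul_inv_pow {μ : 𝕜} (hs : ConjScales V ψ s μ) (hv : v ∈ V) :
    ∀ {m : ℕ} (f : Fin m → Bool), ψ (boolWord (v * s) s f * (s ^ m)⁻¹) =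
      (∑ i, (if f i then 1 else 0) * μ ^ (i : ℕ)) * ψ v
  | 0, f => by simpa [boolWord_zero] using map_one_of_map_mul hψ
  | m + 1, f => by
    rw [boolWord_mul_inv_pow_succ, hψ _ (by split_ifs; exacts [hv, V.one_mem]) _
      (Subgroup.Normal.conj_mem ‹_› _ (boolWord_mul_inv_pow_mem hv (fun i => f i.succ)) s),
      hs _ (boolWord_mul_inv_pow_mem hv (fun i => f i.succ)), map_boolWord_mul_inv_pow hs hv,
      Fin.sum_univ_succ]
    simp only [Fin.val_succ, pow_succ, ← mul_assoc, ← Finset.sum_mul]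
    split_ifs <;> simp only [map_one_of_map_mul hψ, Fin.val_zero, pow_zero, mul_one] <;> ring

lemma injective_boolWord {μ : 𝕜} (hμ : 2 ≤ ‖μ‖) (hs : ConjScales V ψ s μ) (hv : v ∈ V)
    (hψv : ψ v ≠ 0) (m : ℕ) : Function.Injective (boolWord (v * s) s : (Fin m → Bool) → G) := by
  intro f f' hff'
  have hsum : ∑ i, (if f i then 1 else 0) * μ ^ (i : ℕ) =
      ∑ i, (if f' i then 1 else 0) * μ ^ (i : ℕ) := by
    apply mul_right_cancel₀ hψv
    rw [← map_boolWord_mul_inv_pow hψ hs hv, ← map_boolWord_mul_inv_pow hψ hs hv, hff']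
  have hdigits := eq_zero_of_sum_mul_pow_eq_zero hμ
    (fun i => (if f i then 1 else 0) - (if f' i then 1 else 0))
    (fun i => by cases f i <;> cases f' i <;> simp)
    (by simp only [sub_mul, Finset.sum_sub_distrib, hsum, sub_self])
  funext i
  have := congrFun hdigits i
  cases hfi : f i <;> cases hf'i : f' i <;> simp_all

end WordCharacter

section Growth

variable {G 𝕜 : Type*} [Group G] [NormedField 𝕜] {V : Subgroup G} [V.Normal] {ψ : G → 𝕜}
  {lam : 𝕜}

lemma exists_conjScales_zpow (hVcomm : ∀ a ∈ V, ∀ b ∈ V, a * b = b * a) {t : G}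
    (hcyc : ∀ x : G ⧸ V, x ∈ zpowers (t : G ⧸ V)) (ht : ConjScales V ψ t lam) (hlam : lam ≠ 0)
    (g : G) : ∃ d : ℤ, (g ∉ V → d ≠ 0) ∧ ConjScales V ψ g (lam ^ d) := by
  obtain ⟨d, hd⟩ := mem_zpowers_iff.1 (hcyc g)
  have hmem : (t ^ d)⁻¹ * g ∈ V := QuotientGroup.eq.1 (by simpa using hd)
  refine ⟨d, fun hg hd0 => hg (by simpa [hd0] using hmem), ?_⟩
  simpa using (ht.zpow hlam d).mul (conjScales_one_of_mem hVcomm hmem)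

lemma exists_mem_ball_one_conjScales (S : Finset G) (hlam : 2 ≤ ‖lam‖) {u : G} (hu : u ∈ S)
    {d : ℤ} (hd : d ≠ 0) (hud : ConjScales V ψ u (lam ^ d)) :
    ∃ s ∈ ball S 1, ∃ μ : 𝕜, 2 ≤ ‖μ‖ ∧ ConjScales V ψ s μ := by
  have hlam0 : lam ≠ 0 := by rintro rfl; norm_num at hlam
  obtain ⟨n, rfl | rfl⟩ := Int.eq_nat_or_neg d
  · refine ⟨u, mem_ball_one S hu, lam ^ n, ?_, by simpa using hud⟩
    rw [norm_pow]
    exact hlam.trans (le_self_pow₀ (by linarith) (by simpa using hd))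
  · refine ⟨u⁻¹, inv_mem_ball_one S hu, lam ^ n, ?_, by simpa using hud.inv (zpow_ne_zero _ hlam0)⟩
    rw [norm_pow]
    exact hlam.trans (le_self_pow₀ (by linarith) (by simpa using hd))

/-- If `ψ` vanished on `V ∩ B₄`, its kernel in `V` would contain the commutators of the
generators, hence the whole commutator subgroup. -/
lemma exists_mem_ball_four_ne_zero (hψ : ∀ a ∈ V, ∀ b ∈ V, ψ (a * b) = ψ a + ψ b)
    {S : Finset G} (hS : closure (S : Set G) = ⊤) (hscale : ∀ g, ∃ c, ConjScales V ψ g c)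
    (hcomm : commutator G ≤ V) {x : G} (hx : x ∈ commutator G) (hψx : ψ x ≠ 0) :
    ∃ v ∈ ball S 4, v ∈ V ∧ ψ v ≠ 0 := by
  by_contra! h
  let K : Subgroup G :=
    { carrier := {w | w ∈ V ∧ ψ w = 0}
      one_mem' := ⟨V.one_mem, map_one_of_map_mul hψ⟩
      mul_mem' := fun ha hb => ⟨V.mul_mem ha.1 hb.1, by rw [hψ _ ha.1 _ hb.1, ha.2, hb.2, add_zero]⟩
      inv_mem' := fun hw => ⟨V.inv_mem hw.1, by rw [map_inv_of_map_mul hψ hw.1, hw.2, neg_zero]⟩ }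
  have : K.Normal := ⟨fun w hw g => by
    obtain ⟨c, hc⟩ := hscale g
    exact ⟨Normal.conj_mem ‹_› w hw.1 g, by rw [hc w hw.1, hw.2, mul_zero]⟩⟩
  have hK : commutator G ≤ K := commutator_le_of_closure_eq_top hS fun a ha b hb => by
    have hab : ⁅a, b⁆ ∈ V := hcomm (commutator_mem_commutator (mem_top a) (mem_top b))
    refine ⟨hab, h _ ?_ hab⟩
    exact mul_mem_ball S (mul_mem_ball S (mul_mem_ball S (mem_ball_one S ha) (mem_ball_one S hb))
      (inv_mem_ball_one S ha)) (inv_mem_ball_one S hb)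
  exact hψx (hK hx).2

theorem two_rpow_le_growthRate (hψ : ∀ a ∈ V, ∀ b ∈ V, ψ (a * b) = ψ a + ψ b)
    (hVcomm : ∀ a ∈ V, ∀ b ∈ V, a * b = b * a) {t : G}
    (hcyc : ∀ x : G ⧸ V, x ∈ zpowers (t : G ⧸ V)) (hlam : 2 ≤ ‖lam‖) (ht : ConjScales V ψ t lam)
    {v₀ : G} (hv₀ : v₀ ∈ V) (hψv₀ : ψ v₀ ≠ 0) {S : Finset G} (hS : closure (S : Set G) = ⊤) :
    (2 : ℝ) ^ (10 : ℝ)⁻¹ ≤ growthRate S := by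
  have hlam0 : lam ≠ 0 := by rintro rfl; norm_num at hlam
  have hlam1 : lam ≠ 1 := by rintro rfl; norm_num at hlam
  have hscale := exists_conjScales_zpow hVcomm hcyc ht hlam0
  have htV : t ∉ V := fun htV => hlam1 (ht.eq (conjScales_one_of_mem hVcomm htV) hv₀ hψv₀)
  obtain ⟨u, huS, huV⟩ := exists_mem_notMem_of_closure_eq_top hS htV
  obtain ⟨d, hd, hud⟩ := hscale u
  obtain ⟨s, hs, μ, hμ, hsμ⟩ := exists_mem_ball_one_conjScales S hlam huS (hd huV) hud
  obtain ⟨v, hvS, hvV, hψv⟩ := exists_mem_ball_four_ne_zero hψ hS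
    (fun g => (hscale g).elim fun d hd => ⟨_, hd.2⟩)
    (commutator_le_of_forall_mem_zpowers hcyc)
    (commutator_mem_commutator (mem_top t) (mem_top v₀))
    (by rw [ht.map_commutatorElement hψ hv₀]; exact mul_ne_zero (sub_ne_zero.2 hlam1) hψv₀)
  convert le_growthRate_of_injective_boolWord S (k := 5) (by norm_num) (mul_mem_ball S hvS hs)
    (ball_mono S (by norm_num) hs) huS (fun h => huV (h ▸ V.one_mem))
    (injective_boolWord hψ hμ hsμ hvV hψv) using 3
  norm_num

end Growth

open Matrix in
lemma Matrix.exists_vecMul_eq_smul_of_mulVec_eq_smul {K n : Type*} [Field K] [Fintype n]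
    [DecidableEq n] {B : Matrix n n K} {c : K} {x : n → K} (hx : x ≠ 0) (hBx : B *ᵥ x = c • x) :
    ∃ y ≠ 0, y ᵥ* B = c • y := by
  have hdet : (B - c • 1).det = 0 :=
    exists_mulVec_eq_zero_iff.1 ⟨x, hx, by rw [sub_mulVec, hBx, smul_mulVec, one_mulVec, sub_self]⟩
  obtain ⟨y, hy, hyB⟩ := exists_vecMul_eq_zero_iff.2 hdet
  refine ⟨y, hy, ?_⟩
  rwa [vecMul_sub, vecMul_smul, vecMul_one, sub_eq_zero] at hyB

open Matrix in
/-- The witness is `ψ = y ⬝ᵥ (coordinates in ℤʳ)`, extended by `0` outside `V`. -/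
lemma exists_conjScales_of_vecMul_eq_smul {G : Type*} [Group G] {r : ℕ} {V : Subgroup G}
    [hV : V.Normal] (e : V ≃* Multiplicative (Fin r → ℤ)) {t : G} {A : Matrix (Fin r) (Fin r) ℤ}
    (hconj : ∀ (v : G) (hv : v ∈ V),
      Multiplicative.toAdd (e ⟨t * v * t⁻¹, hV.conj_mem v hv t⟩) =
        A.mulVec (Multiplicative.toAdd (e ⟨v, hv⟩)))
    {lam : ℂ} {y : Fin r → ℂ} (hy : y ≠ 0) (hyA : y ᵥ* A.map ((↑) : ℤ → ℂ) = lam • y) :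
    ∃ ψ : G → ℂ, (∀ a ∈ V, ∀ b ∈ V, ψ (a * b) = ψ a + ψ b) ∧ ConjScales V ψ t lam ∧
      ∃ v ∈ V, ψ v ≠ 0 := by
  classical
  let ψ : G → ℂ := fun g =>
    if hg : g ∈ V then y ⬝ᵥ fun i => (Multiplicative.toAdd (e ⟨g, hg⟩) i : ℂ) else 0
  have hψ : ∀ g (hg : g ∈ V), ψ g = y ⬝ᵥ fun i => (Multiplicative.toAdd (e ⟨g, hg⟩) i : ℂ) :=
    fun g hg => dif_pos hg
  refine ⟨ψ, fun a ha b hb => ?_, fun w hw => ?_, ?_⟩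
  · rw [hψ _ (V.mul_mem ha hb), hψ a ha, hψ b hb, ← dotProduct_add]
    have hab : (⟨a * b, V.mul_mem ha hb⟩ : V) = ⟨a, ha⟩ * ⟨b, hb⟩ := rfl
    congr 1
    ext i
    rw [hab, map_mul, toAdd_mul, Pi.add_apply, Int.cast_add, Pi.add_apply]
  · rw [hψ _ (hV.conj_mem w hw t), hψ w hw, hconj w hw]
    have hcast : (fun i => ((A *ᵥ Multiplicative.toAdd (e ⟨w, hw⟩)) i : ℂ)) =
        A.map ((↑) : ℤ → ℂ) *ᵥ fun i => (Multiplicative.toAdd (e ⟨w, hw⟩) i : ℂ) := by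
      ext i
      exact RingHom.map_mulVec (Int.castRingHom ℂ) A _ i
    rw [hcast, dotProduct_mulVec, hyA, smul_dotProduct, smul_eq_mul]
  · obtain ⟨i, hi⟩ := Function.ne_iff.1 hy
    refine ⟨e.symm (Multiplicative.ofAdd (Pi.single i 1)), SetLike.coe_mem _, ?_⟩
    rw [hψ _ (SetLike.coe_mem _)]
    simpa [Pi.single_apply, dotProduct] using hi

open Matrix in
/-- Lemma "two": a f.g. group with normal `ℤ^r` and cyclic quotient,
where the conjugation matrix has an eigenvalue of modulus at least 2, has uniform
exponential growth. -/
theorem uniform_growth_abelian_by_cyclic_eigenvalue {G : Type*} [Group G]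
    (hfg : Group.FG G) (r : ℕ) (V : Subgroup G) [hV : V.Normal]
    (e : ↥V ≃* Multiplicative (Fin r → ℤ))
    (t : G) (hcyc : ∀ x : G ⧸ V, x ∈ Subgroup.zpowers ((t : G ⧸ V)))
    (A : GL (Fin r) ℤ)
    (hconj : ∀ (v : G) (hv : v ∈ V),
      Multiplicative.toAdd (e ⟨t * v * t⁻¹, hV.conj_mem v hv t⟩) =
        (A : Matrix (Fin r) (Fin r) ℤ).mulVec (Multiplicative.toAdd (e ⟨v, hv⟩)))
    (hEig : ∃ lam : ℂ, 2 ≤ ‖lam‖ ∧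
      ∃ x : Fin r → ℂ, x ≠ 0 ∧
        ((A : Matrix (Fin r) (Fin r) ℤ).map ((↑·) : ℤ → ℂ)).mulVec x = lam • x) :
    UniformExponentialGrowth G := by
  obtain ⟨lam, hlam, x, hx, hAx⟩ := hEig
  obtain ⟨y, hy, hyA⟩ := Matrix.exists_vecMul_eq_smul_of_mulVec_eq_smul hx hAx
  obtain ⟨ψ, hψ, ht, v₀, hv₀, hψv₀⟩ := exists_conjScales_of_vecMul_eq_smul e hconj hy hyA
  have hVcomm : ∀ a ∈ V, ∀ b ∈ V, a * b = b * a := fun a ha b hb =>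
    congrArg Subtype.val (e.injective (by rw [map_mul, map_mul, mul_comm]) :
      (⟨a, ha⟩ * ⟨b, hb⟩ : V) = ⟨b, hb⟩ * ⟨a, ha⟩)
  exact uniformExponentialGrowth_of_le_growthRate hfg
    (Real.one_lt_rpow (by norm_num) (by positivity))
    fun S hS => two_rpow_le_growthRate hψ hVcomm hcyc hlam ht hv₀ hψv₀ hS
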